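/- A category C with finite products has finite biproducts if and only if C is enriched over commutative monoids (i.e., each hom-set carries a commutative monoid structure such that composition is bilinear). Explicitly, given CMon-enrichment, the product cone is also a coproduct cocone via the injections ⟨id, 0⟩ and ⟨0, id⟩. -/

import Mathlib

open CategoryTheory CategoryTheory.Limits

/-- An enrichment of a category `C` over commutative monoids: every hom-set
carries a commutative monoid structure `(0, +)` and composition preserves `0`
and `+` in each argument (composition is bilinear). -/
structure CMonEnrichment (C : Type*) [Category C] where
  add : ∀ {X Y : C}, (X ⟶ Y) → (X ⟶ Y) → (X ⟶ Y)
  zero : ∀ {X Y : C}, (X ⟶ Y)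
  add_comm : ∀ {X Y : C} (f g : X ⟶ Y), add f g = add g f
  add_assoc : ∀ {X Y : C} (f g h : X ⟶ Y), add (add f g) h = add f (add g h)
  zero_add : ∀ {X Y : C} (f : X ⟶ Y), add zero f = f
  comp_add : ∀ {X Y Z : C} (f : X ⟶ Y) (g h : Y ⟶ Z),
    f ≫ add g h = add (f ≫ g) (f ≫ h)
  add_comp : ∀ {X Y Z : C} (f g : X ⟶ Y) (h : Y ⟶ Z),
    add f g ≫ h = add (f ≫ h) (g ≫ h)
  comp_zero : ∀ {X Y Z : C} (f : X ⟶ Y), f ≫ (zero : Y ⟶ Z) = zero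
  zero_comp : ∀ {X Y Z : C} (f : Y ⟶ Z), (zero : X ⟶ Y) ≫ f = zero

/-! Given the enrichment, the maps `ι j : f j ⟶ ∏ᶜ f` with components `𝟙` and `0` satisfy
`∑ j, π j ≫ ι j = 𝟙`, because both sides have the same components. Hence every `m` out of the
product equals `∑ j, π j ≫ ι j ≫ m`, which is determined by the composites `ι j ≫ m`; this makes
`∑ j, π j ≫ s_j` the unique map with `ι j ≫ _ = s_j`, so the product is also a coproduct.
Conversely, with binary biproducts `f + g := biprod.lift (𝟙 X) (𝟙 X) ≫ biprod.desc f g` is a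
bilinear commutative monoid structure by an Eckmann–Hilton argument. -/

noncomputable section

namespace CMonEnrichment

variable {C : Type*} [Category C] (E : CMonEnrichment C)

theorem add_zero {X Y : C} (f : X ⟶ Y) : E.add f E.zero = f :=
  (E.add_comm f E.zero).trans (E.zero_add f)

abbrev homAddCommMonoid (X Y : C) : AddCommMonoid (X ⟶ Y) where
  add := E.add
  zero := E.zero
  add_assoc := E.add_assoc
  zero_add := E.zero_add
  add_zero := E.add_zero
  add_comm := E.add_comm
  nsmul n f := Nat.rec E.zero (fun _ g => E.add g f) n
  nsmul_zero _ := rfl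
  nsmul_succ _ _ := rfl

abbrev toHasZeroMorphisms : HasZeroMorphisms C where
  zero _ _ := ⟨E.zero⟩
  comp_zero f _ := E.comp_zero f
  zero_comp _ _ _ f := E.zero_comp f

theorem zero_eq_zero [HasZeroMorphisms C] {X Y : C} : (E.zero : X ⟶ Y) = 0 := by
  rw [← E.comp_zero (0 : X ⟶ Y), Limits.zero_comp]

theorem sum_comp {J : Type*} (s : Finset J) {X Y Z : C} (g : J → (X ⟶ Y)) (h : Y ⟶ Z) :
    letI := E.homAddCommMonoid; (∑ j ∈ s, g j) ≫ h = ∑ j ∈ s, g j ≫ h :=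
  letI := E.homAddCommMonoid
  map_sum (⟨⟨(· ≫ h), E.zero_comp h⟩, fun f g => E.add_comp f g h⟩ : (X ⟶ Y) →+ (X ⟶ Z)) g s

theorem comp_sum {J : Type*} (s : Finset J) {X Y Z : C} (f : X ⟶ Y) (g : J → (Y ⟶ Z)) :
    letI := E.homAddCommMonoid; f ≫ (∑ j ∈ s, g j) = ∑ j ∈ s, f ≫ g j :=
  letI := E.homAddCommMonoid
  map_sum (⟨⟨(f ≫ ·), E.comp_zero f⟩, E.comp_add f⟩ : (Y ⟶ Z) →+ (X ⟶ Z)) g s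

theorem add_comp_comp_of_total {X Y P T : C} {fst : P ⟶ X} {snd : P ⟶ Y} {inl : X ⟶ P}
    {inr : Y ⟶ P} (total : E.add (fst ≫ inl) (snd ≫ inr) = 𝟙 P) (m : P ⟶ T) :
    E.add (fst ≫ inl ≫ m) (snd ≫ inr ≫ m) = m := by
  rw [← Category.assoc, ← Category.assoc, ← E.add_comp, total, Category.id_comp]

def isColimitBinaryCofanOfTotal {X Y P : C} {fst : P ⟶ X} {snd : P ⟶ Y} {inl : X ⟶ P}
    {inr : Y ⟶ P} (inl_fst : inl ≫ fst = 𝟙 X) (inl_snd : inl ≫ snd = E.zero)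
    (inr_fst : inr ≫ fst = E.zero) (inr_snd : inr ≫ snd = 𝟙 Y)
    (total : E.add (fst ≫ inl) (snd ≫ inr) = 𝟙 P) : IsColimit (BinaryCofan.mk inl inr) :=
  BinaryCofan.IsColimit.mk _ (fun f g => E.add (fst ≫ f) (snd ≫ g))
    (fun f g => show inl ≫ E.add (fst ≫ f) (snd ≫ g) = f by
      rw [E.comp_add, ← Category.assoc, ← Category.assoc, inl_fst, inl_snd, Category.id_comp,
        E.zero_comp, E.add_zero])
    (fun f g => show inr ≫ E.add (fst ≫ f) (snd ≫ g) = g by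
      rw [E.comp_add, ← Category.assoc, ← Category.assoc, inr_fst, inr_snd, Category.id_comp,
        E.zero_comp, E.zero_add])
    (fun f g m hl hr => by
      subst hl hr
      exact (E.add_comp_comp_of_total total m).symm)

def isColimitProdCofan (X Y : C) [HasBinaryProduct X Y] :
    IsColimit (BinaryCofan.mk (prod.lift (𝟙 X) (E.zero : X ⟶ Y))
      (prod.lift (E.zero : Y ⟶ X) (𝟙 Y))) :=
  E.isColimitBinaryCofanOfTotal (prod.lift_fst _ _) (prod.lift_snd _ _) (prod.lift_fst _ _)
    (prod.lift_snd _ _) <| by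
      ext
      · rw [E.add_comp, Category.assoc, Category.assoc, prod.lift_fst, prod.lift_fst,
          Category.comp_id, E.comp_zero, E.add_zero, Category.id_comp]
      · rw [E.add_comp, Category.assoc, Category.assoc, prod.lift_snd, prod.lift_snd,
          Category.comp_id, E.comp_zero, E.zero_add, Category.id_comp]

section HasZeroMorphisms

variable [HasZeroMorphisms C] {J : Type*}

theorem sum_comp_comp_of_total [Fintype J] {f : J → C} (b : Bicone f)
    (total : letI := E.homAddCommMonoid; ∑ j, b.π j ≫ b.ι j = 𝟙 b.pt) {T : C} (m : b.pt ⟶ T) :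
    letI := E.homAddCommMonoid; ∑ j, b.π j ≫ b.ι j ≫ m = m := by
  simp only [← Category.assoc]
  rw [← E.sum_comp, total, Category.id_comp]

def isColimitOfTotal [Fintype J] {f : J → C} (b : Bicone f)
    (total : letI := E.homAddCommMonoid; ∑ j, b.π j ≫ b.ι j = 𝟙 b.pt) :
    IsColimit b.toCocone :=
  letI := E.homAddCommMonoid
  { desc := fun s => ∑ j, b.π j ≫ s.ι.app ⟨j⟩
    fac := fun s ⟨j⟩ => show b.ι j ≫ ∑ k, b.π k ≫ s.ι.app ⟨k⟩ = s.ι.app ⟨j⟩ by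
      classical
      rw [E.comp_sum, Finset.sum_eq_single j]
      · simp
      · intro k _ hkj
        rw [← Category.assoc, b.ι_π, dif_neg (Ne.symm hkj), Limits.zero_comp, ← E.zero_eq_zero]
        rfl
      · simp
    uniq := fun s m hm =>
      (E.sum_comp_comp_of_total b total m).symm.trans
        (Finset.sum_congr rfl fun j _ => congrArg (b.π j ≫ ·) (hm ⟨j⟩)) }

theorem total_of_isLimit [Fintype J] {f : J → C} (b : Bicone f) (hb : IsLimit b.toCone) :
    letI := E.homAddCommMonoid; ∑ j, b.π j ≫ b.ι j = 𝟙 b.pt :=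
  letI := E.homAddCommMonoid
  hb.hom_ext fun ⟨k⟩ => show (∑ j, b.π j ≫ b.ι j) ≫ b.π k = 𝟙 b.pt ≫ b.π k by
    classical
    rw [E.sum_comp, Finset.sum_eq_single k]
    · simp
    · intro j _ hjk
      rw [Category.assoc, b.ι_π, dif_neg hjk, Limits.comp_zero, ← E.zero_eq_zero]
      rfl
    · simp

def isBilimitOfIsLimit [Fintype J] {f : J → C} (b : Bicone f) (hb : IsLimit b.toCone) :
    b.IsBilimit :=
  ⟨hb, E.isColimitOfTotal b (E.total_of_isLimit b hb)⟩

end HasZeroMorphisms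

def ofHasBinaryBiproducts [HasZeroMorphisms C] [HasBinaryBiproducts C] : CMonEnrichment C :=
  letI := SemiadditiveOfBinaryBiproducts.addCommMonoidHomOfHasBinaryBiproducts (C := C)
  { add := (· + ·)
    zero := 0
    add_comm := _root_.add_comm
    add_assoc := _root_.add_assoc
    zero_add := _root_.zero_add
    comp_add := SemiadditiveOfBinaryBiproducts.comp_add
    add_comp := SemiadditiveOfBinaryBiproducts.add_comp
    comp_zero _ := Limits.comp_zero
    zero_comp _ := Limits.zero_comp }

end CMonEnrichment

end

theorem CMonEnrichment.hasFiniteBiproducts {C : Type*} [Category C] [HasZeroMorphisms C]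
    [HasFiniteProducts C] (E : CMonEnrichment C) : HasFiniteBiproducts C :=
  ⟨fun _ => ⟨fun _ => HasBiproduct.mk
    ⟨_, E.isBilimitOfIsLimit (Bicone.ofLimitCone (limit.isLimit _)) <|
      (limit.isLimit _).ofIsoLimit <| Cone.ext (Iso.refl _) fun _ => (Category.id_comp _).symm⟩⟩⟩

/-- **A category with finite products has finite biproducts iff it is
CMon-enriched.**  Moreover, given a CMon-enrichment, for each pair of objects
the product cone is also a coproduct cocone via the injections `⟨id, 0⟩` and
`⟨0, id⟩`. -/
theorem biproducts_iff_cmon_enriched (C : Type*) [Category C]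
    [HasFiniteProducts C] :
    (Nonempty (CMonEnrichment C) ↔
      ∃ _ : HasZeroMorphisms C, HasFiniteBiproducts C) ∧
    (∀ (E : CMonEnrichment C) (X Y : C),
      Nonempty (IsColimit (BinaryCofan.mk
        (prod.lift (𝟙 X) (E.zero : X ⟶ Y))
        (prod.lift (E.zero : Y ⟶ X) (𝟙 Y))))) := by
  refine ⟨⟨fun ⟨E⟩ => ?_, fun ⟨_, _⟩ => ?_⟩, fun E X Y => ⟨E.isColimitProdCofan X Y⟩⟩
  · let := E.toHasZeroMorphisms
    exact ⟨_, E.hasFiniteBiproducts⟩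
  · have := hasBinaryBiproducts_of_finite_biproducts C
    exact ⟨.ofHasBinaryBiproducts⟩
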